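/- For n ≥ 3 and any k with 2 ≤ k ≤ n, the polytope B_n^k has dimension n² − 2n + 1 (the same dimension as the full Birkhoff polytope). -/

import Mathlib

/-! The differences of points of `B_n^k` have zero row and column sums, and the space of such
`n × n` matrices has dimension `(n - 1)²`: it has the basis `(e_a - e_n)(e_b - e_n)ᵀ`,
`a, b < n`.
Conversely, perturbing the barycentre `J / n` by `1 / 2n` times one of these basis matrices keeps
the entries nonnegative, and as a monotone lattice path meets `2n - 1` cells, each at most once,
its path sums stay at most `(2n - 1) / n + 2 / 2n = 2 ≤ k`. So every basis matrix lies in the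
direction of `B_n^k`. -/

open scoped BigOperators

/-- A monotone lattice path in the `n × n` grid from `(0,0)` to `(n-1,n-1)` (0-indexed). -/
def IsLatticePath (n : ℕ) (p : ℕ → ℕ × ℕ) : Prop :=
  p 0 = (0, 0) ∧ p (2 * n - 2) = (n - 1, n - 1) ∧
    ∀ i, i < 2 * n - 2 →
      p (i + 1) = ((p i).1 + 1, (p i).2) ∨ p (i + 1) = ((p i).1, (p i).2 + 1)

/-- Entry of a matrix at a ℕ-indexed position (0 outside the index range). -/
def ent {n : ℕ} (X : Matrix (Fin n) (Fin n) ℝ) (q : ℕ × ℕ) : ℝ :=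
  if h : q.1 < n ∧ q.2 < n then X ⟨q.1, h.1⟩ ⟨q.2, h.2⟩ else 0

/-- Sum of matrix entries along a lattice path. -/
def pathSum {n : ℕ} (X : Matrix (Fin n) (Fin n) ℝ) (p : ℕ → ℕ × ℕ) : ℝ :=
  ∑ i ∈ Finset.range (2 * n - 1), ent X (p i)

/-- Membership in the restricted Birkhoff polytope `B_n^k`. -/
def InRestrictedBirkhoff (n k : ℕ) (X : Matrix (Fin n) (Fin n) ℝ) : Prop :=
  (∀ i j, 0 ≤ X i j) ∧ (∀ i, ∑ j, X i j = 1) ∧ (∀ j, ∑ i, X i j = 1) ∧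
    ∀ p : ℕ → ℕ × ℕ, IsLatticePath n p → pathSum X p ≤ k

/-- A real matrix with all entries integers. -/
def IsIntegerMatrix {n : ℕ} (X : Matrix (Fin n) (Fin n) ℝ) : Prop :=
  ∀ i j, ∃ m : ℤ, X i j = (m : ℝ)

open Matrix Finset

namespace IsLatticePath

variable {n : ℕ} {p : ℕ → ℕ × ℕ}

theorem fst_add_snd (hp : IsLatticePath n p) : ∀ t ≤ 2 * n - 2, (p t).1 + (p t).2 = t
  | 0, _ => by simp [hp.1]
  | t + 1, ht => by
    have ih := fst_add_snd hp t (by omega)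
    rcases hp.2.2 t (by omega) with h | h <;> rw [h] <;> dsimp only <;> omega

theorem injOn (hp : IsLatticePath n p) : Set.InjOn p (range (2 * n - 1)) := by
  intro s hs t ht hst
  rw [coe_range, Set.mem_Iio] at hs ht
  have hs' := hp.fst_add_snd s (by omega)
  have ht' := hp.fst_add_snd t (by omega)
  rw [hst] at hs'
  omega

end IsLatticePath

section PathSum

variable {n : ℕ}

theorem ent_add (X Y : Matrix (Fin n) (Fin n) ℝ) (q : ℕ × ℕ) :
    ent (X + Y) q = ent X q + ent Y q := by
  unfold ent; split_ifs <;> simp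

theorem ent_smul (c : ℝ) (X : Matrix (Fin n) (Fin n) ℝ) (q : ℕ × ℕ) :
    ent (c • X) q = c * ent X q := by
  unfold ent; split_ifs <;> simp

theorem ent_mono {X Y : Matrix (Fin n) (Fin n) ℝ} (h : ∀ i j, X i j ≤ Y i j)
    (q : ℕ × ℕ) : ent X q ≤ ent Y q := by
  unfold ent; split_ifs <;> simp [h]

theorem pathSum_add (X Y : Matrix (Fin n) (Fin n) ℝ) (p : ℕ → ℕ × ℕ) :
    pathSum (X + Y) p = pathSum X p + pathSum Y p := by
  simp only [pathSum, ent_add, sum_add_distrib]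

theorem pathSum_smul (c : ℝ) (X : Matrix (Fin n) (Fin n) ℝ) (p : ℕ → ℕ × ℕ) :
    pathSum (c • X) p = c * pathSum X p := by
  simp only [pathSum, ent_smul, mul_sum]

theorem pathSum_mono {X Y : Matrix (Fin n) (Fin n) ℝ} (h : ∀ i j, X i j ≤ Y i j)
    (p : ℕ → ℕ × ℕ) : pathSum X p ≤ pathSum Y p :=
  sum_le_sum fun t _ => ent_mono h (p t)

theorem pathSum_of_const_le {c : ℝ} (hc : 0 ≤ c) (p : ℕ → ℕ × ℕ) :
    pathSum (of fun _ _ => c : Matrix (Fin n) (Fin n) ℝ) p ≤ (2 * n - 1 : ℕ) * c := by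
  have h := sum_le_card_nsmul (range (2 * n - 1))
    (fun t => ent (of fun _ _ => c : Matrix (Fin n) (Fin n) ℝ) (p t)) c
    fun t _ => by unfold ent; split_ifs <;> simp [hc]
  simpa [pathSum] using h

theorem IsLatticePath.pathSum_single_one_le {p : ℕ → ℕ × ℕ} (hp : IsLatticePath n p)
    (i j : Fin n) : pathSum (single i j (1 : ℝ)) p ≤ 1 := by
  have hent (t : ℕ) :
      ent (single i j (1 : ℝ)) (p t) = if p t = ((i : ℕ), (j : ℕ)) then 1 else 0 := by
    unfold ent
    split_ifs <;> simp_all [single_apply, Fin.ext_iff, Prod.ext_iff, eq_comm]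
  simp only [pathSum, hent, sum_boole]
  refine Nat.cast_le_one.mpr (card_le_one.mpr fun s hs t ht => ?_)
  rw [mem_filter] at hs ht
  exact hp.injOn hs.1 ht.1 (hs.2.trans ht.2.symm)

end PathSum

section LineSumZero

variable (R : Type*) [CommRing R]

def lineSumZero (m n : Type*) [Fintype m] [Fintype n] : Submodule R (Matrix m n R) where
  carrier := {X | (∀ i, ∑ j, X i j = 0) ∧ ∀ j, ∑ i, X i j = 0}
  add_mem' hX hY := ⟨fun i => by simp [sum_add_distrib, hX.1 i, hY.1 i],
    fun j => by simp [sum_add_distrib, hX.2 j, hY.2 j]⟩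
  zero_mem' := ⟨fun _ => by simp, fun _ => by simp⟩
  smul_mem' c X hX :=
    ⟨fun i => by simp [← mul_sum, hX.1 i], fun j => by simp [← mul_sum, hX.2 j]⟩

variable {R}

theorem vectorSpan_le_lineSumZero {m n : Type*} [Fintype m] [Fintype n]
    {s : Set (Matrix m n R)} {r : m → R} {c : n → R}
    (hs : ∀ X ∈ s, (∀ i, ∑ j, X i j = r i) ∧ ∀ j, ∑ i, X i j = c j) :
    vectorSpan R s ≤ lineSumZero R m n := by
  rw [vectorSpan_def, Submodule.span_le]
  rintro _ ⟨X, hX, Y, hY, rfl⟩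
  exact ⟨fun i => by simp [sum_sub_distrib, (hs X hX).1 i, (hs Y hY).1 i],
    fun j => by simp [sum_sub_distrib, (hs X hX).2 j, (hs Y hY).2 j]⟩

variable {m : ℕ}

def singleSubLast (a : Fin m) : Fin (m + 1) → R :=
  Pi.single a.castSucc 1 - Pi.single (Fin.last m) 1

def outerSingleSubLast (ab : Fin m × Fin m) : Matrix (Fin (m + 1)) (Fin (m + 1)) R :=
  vecMulVec (singleSubLast ab.1) (singleSubLast ab.2)

theorem singleSubLast_castSucc (a c : Fin m) :
    singleSubLast (R := R) a c.castSucc = if c = a then 1 else 0 := by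
  simp [singleSubLast, Pi.single_apply, (Fin.castSucc_lt_last c).ne]

theorem singleSubLast_last (a : Fin m) : singleSubLast (R := R) a (Fin.last m) = -1 := by
  simp [singleSubLast, (Fin.castSucc_lt_last a).ne']

theorem sum_singleSubLast (a : Fin m) : ∑ i, singleSubLast (R := R) a i = 0 := by
  simp [singleSubLast, sum_sub_distrib]

theorem sum_mul_singleSubLast {r : Fin (m + 1) → R} (hr : ∑ i, r i = 0) (j : Fin (m + 1)) :
    ∑ b : Fin m, r b.castSucc * singleSubLast b j = r j := by
  induction j using Fin.lastCases with
  | last =>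
    rw [Fin.sum_univ_castSucc, add_eq_zero_iff_eq_neg] at hr
    simp [singleSubLast_last, hr]
  | cast c => simp [singleSubLast_castSucc]

theorem outerSingleSubLast_mem_lineSumZero (ab : Fin m × Fin m) :
    outerSingleSubLast ab ∈ lineSumZero R (Fin (m + 1)) (Fin (m + 1)) :=
  ⟨fun i => by simp [outerSingleSubLast, vecMulVec_apply, ← mul_sum, sum_singleSubLast],
    fun j => by simp [outerSingleSubLast, vecMulVec_apply, ← sum_mul, sum_singleSubLast]⟩

theorem eq_sum_smul_outerSingleSubLast {X : Matrix (Fin (m + 1)) (Fin (m + 1)) R}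
    (hX : X ∈ lineSumZero R (Fin (m + 1)) (Fin (m + 1))) :
    X = ∑ ab : Fin m × Fin m, X ab.1.castSucc ab.2.castSucc • outerSingleSubLast ab := by
  ext i j
  have hrow (a : Fin m) : ∑ b : Fin m, X a.castSucc b.castSucc * singleSubLast b j =
      X a.castSucc j := sum_mul_singleSubLast (hX.1 _) j
  calc X i j = ∑ a : Fin m, X a.castSucc j * singleSubLast a i :=
        (sum_mul_singleSubLast (hX.2 j) i).symm
    _ = _ := by
      simp only [← hrow, sum_mul, Matrix.sum_apply, Fintype.sum_prod_type, Matrix.smul_apply,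
        outerSingleSubLast, vecMulVec_apply, smul_eq_mul]
      exact sum_congr rfl fun _ _ => sum_congr rfl fun _ _ => by ring

theorem linearIndependent_outerSingleSubLast :
    LinearIndependent R (outerSingleSubLast (R := R) (m := m)) := by
  rw [Fintype.linearIndependent_iff]
  intro g hg ab
  have h := congr_fun₂ hg ab.1.castSucc ab.2.castSucc
  simpa [Matrix.sum_apply, Fintype.sum_prod_type, outerSingleSubLast, vecMulVec_apply,
    singleSubLast_castSucc] using h

theorem span_outerSingleSubLast :
    Submodule.span R (Set.range (outerSingleSubLast (R := R) (m := m))) =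
      lineSumZero R (Fin (m + 1)) (Fin (m + 1)) := by
  refine le_antisymm (Submodule.span_le.mpr ?_) fun X hX => ?_
  · rintro _ ⟨ab, rfl⟩
    exact outerSingleSubLast_mem_lineSumZero ab
  · rw [eq_sum_smul_outerSingleSubLast hX]
    exact Submodule.sum_mem _ fun ab _ =>
      Submodule.smul_mem _ _ (Submodule.subset_span ⟨ab, rfl⟩)

theorem finrank_lineSumZero [Nontrivial R] :
    Module.finrank R (lineSumZero R (Fin (m + 1)) (Fin (m + 1))) = m ^ 2 := by
  rw [← span_outerSingleSubLast, finrank_span_eq_card linearIndependent_outerSingleSubLast]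
  simp [sq]

end LineSumZero

section RestrictedBirkhoff

variable {m : ℕ}

theorem neg_one_le_outerSingleSubLast (ab : Fin m × Fin m) (i j : Fin (m + 1)) :
    -1 ≤ outerSingleSubLast (R := ℝ) ab i j := by
  simp only [outerSingleSubLast, vecMulVec_apply, singleSubLast, Pi.sub_apply, Pi.single_apply]
  split_ifs <;> norm_num

theorem outerSingleSubLast_le (ab : Fin m × Fin m) (i j : Fin (m + 1)) :
    outerSingleSubLast (R := ℝ) ab i j ≤
      single ab.1.castSucc ab.2.castSucc 1 i j + single (Fin.last m) (Fin.last m) 1 i j := by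
  induction i using Fin.lastCases <;> induction j using Fin.lastCases <;>
    simp [outerSingleSubLast, vecMulVec_apply, singleSubLast_castSucc, singleSubLast_last,
      single_apply, eq_comm, (Fin.castSucc_lt_last _).ne] <;>
    split_ifs <;> simp_all

theorem IsLatticePath.pathSum_outerSingleSubLast_le {p : ℕ → ℕ × ℕ}
    (hp : IsLatticePath (m + 1) p) (ab : Fin m × Fin m) :
    pathSum (outerSingleSubLast ab) p ≤ 2 := by
  calc pathSum (outerSingleSubLast ab) p
      ≤ pathSum (single ab.1.castSucc ab.2.castSucc 1 + single (Fin.last m) (Fin.last m) 1) p :=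
        pathSum_mono (outerSingleSubLast_le ab) p
    _ ≤ 1 + 1 := by
      rw [pathSum_add]
      exact add_le_add (hp.pathSum_single_one_le _ _) (hp.pathSum_single_one_le _ _)
    _ = 2 := one_add_one_eq_two

theorem inRestrictedBirkhoff_barycentre_add {n k : ℕ} (hn : 0 < n) (hk : 2 ≤ k)
    {E : Matrix (Fin n) (Fin n) ℝ} (hE : E ∈ lineSumZero ℝ (Fin n) (Fin n))
    (hE_ge : ∀ i j, -1 ≤ E i j) (hE_path : ∀ p, IsLatticePath n p → pathSum E p ≤ 2) :
    InRestrictedBirkhoff n k (of (fun _ _ => (n : ℝ)⁻¹) + (2 * n : ℝ)⁻¹ • E) := by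
  have hn' : (0 : ℝ) < n := Nat.cast_pos.mpr hn
  refine ⟨fun i j => ?_, fun i => ?_, fun j => ?_, fun p hp => ?_⟩
  · have hE_ij :=
      mul_le_mul_of_nonneg_left (hE_ge i j) (by positivity : (0 : ℝ) ≤ (2 * n : ℝ)⁻¹)
    have h_inv : (2 * n : ℝ)⁻¹ ≤ (n : ℝ)⁻¹ := inv_anti₀ hn' (by linarith)
    simp only [Matrix.add_apply, Matrix.smul_apply, of_apply, smul_eq_mul]
    linarith
  · simp [sum_add_distrib, ← mul_sum, hE.1 i, hn'.ne']
  · simp [sum_add_distrib, ← mul_sum, hE.2 j, hn'.ne']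
  · rw [pathSum_add, pathSum_smul]
    have hJ := pathSum_of_const_le (n := n) (inv_nonneg.mpr hn'.le) p
    push_cast [Nat.cast_sub (by omega : 1 ≤ 2 * n)] at hJ
    calc _ ≤ (2 * n - 1) * (n : ℝ)⁻¹ + (2 * n : ℝ)⁻¹ * 2 :=
          add_le_add hJ (mul_le_mul_of_nonneg_left (hE_path p hp) (by positivity))
      _ = 2 := by field_simp; ring
      _ ≤ k := by exact_mod_cast hk

theorem vectorSpan_restrictedBirkhoff {k : ℕ} (hk : 2 ≤ k) :
    vectorSpan ℝ {X | InRestrictedBirkhoff (m + 1) k X} =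
      lineSumZero ℝ (Fin (m + 1)) (Fin (m + 1)) := by
  refine le_antisymm
    (vectorSpan_le_lineSumZero (r := 1) (c := 1) fun X hX => ⟨hX.2.1, hX.2.2.1⟩) ?_
  rw [← span_outerSingleSubLast, Submodule.span_le]
  rintro _ ⟨ab, rfl⟩
  have h := vsub_mem_vectorSpan ℝ (s := {X | InRestrictedBirkhoff (m + 1) k X})
    (inRestrictedBirkhoff_barycentre_add (Nat.succ_pos m) hk
      (outerSingleSubLast_mem_lineSumZero ab) (neg_one_le_outerSingleSubLast ab)
      fun _ hp => hp.pathSum_outerSingleSubLast_le ab)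
    (inRestrictedBirkhoff_barycentre_add (E := 0) (Nat.succ_pos m) hk (zero_mem _)
      (fun _ _ => by norm_num) fun _ _ => by simp [pathSum, ent])
  rw [smul_zero, add_zero, vsub_eq_sub, add_sub_cancel_left] at h
  have h2 := Submodule.smul_mem _ (2 * ((m + 1 : ℕ) : ℝ)) h
  rwa [smul_inv_smul₀ (by positivity)] at h2

end RestrictedBirkhoff

theorem dim_restrictedBirkhoff_general (n k : ℕ) (hn : 3 ≤ n) (hk : 2 ≤ k) :
    Module.finrank ℝ
      (affineSpan ℝ {X : Matrix (Fin n) (Fin n) ℝ | InRestrictedBirkhoff n k X}).direction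
      = n ^ 2 - 2 * n + 1 := by
  obtain ⟨m, rfl⟩ : ∃ m, n = m + 1 := ⟨n - 1, by omega⟩
  rw [direction_affineSpan, vectorSpan_restrictedBirkhoff hk, finrank_lineSumZero]
  have h_le : 2 * (m + 1) ≤ (m + 1) ^ 2 := by nlinarith
  zify [h_le]
  ring

/-- For `n ≥ 3` and `2 ≤ k ≤ n`, the polytope `B_n^k` has dimension `n² - 2n + 1`. -/
theorem dim_restrictedBirkhoff (n k : ℕ) (hn : 3 ≤ n) (hk : 2 ≤ k) (hkn : k ≤ n) :
    Module.finrank ℝ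
      (affineSpan ℝ {X : Matrix (Fin n) (Fin n) ℝ | InRestrictedBirkhoff n k X}).direction
      = n ^ 2 - 2 * n + 1 :=
  dim_restrictedBirkhoff_general n k hn hk
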